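/- Let m < 0 and let F : ℝ³ → ℂ be measurable such that for every N ∈ ℕ there exists C_N > 0 with |F(η)| ≤ C_N (1+|η₁|)^m (1+|η₂|+|η₃|)^{−N} for all η ∈ ℝ³. Let s, k₁, k₂, k₃ ∈ ℝ with k₁ ≥ 0 and max(s,0) + k₁ + m < −1/2. Then ∫_{ℝ³} ⟨η⟩^{2s} ⟨η₁⟩^{2k₁} ⟨η₂⟩^{2k₂} ⟨η₃⟩^{2k₃} |F(η)|² dη < ∞. -/

import Mathlib

/-!
Bound the integrand pointwise by `C² ∏ᵢ ⟨ηᵢ⟩^{pᵢ}` with every `pᵢ < -1`; such a product of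
one-dimensional weights is integrable. The total weight is absorbed through
`⟨η⟩ ≤ ⟨η₁⟩⟨η₂⟩⟨η₃⟩`, the factor `(1+|η₁|)^{2m}` is at most `⟨η₁⟩^{2m}` because `m ≤ 0`, and
`(1+|η₂|+|η₃|)^{-2N} ≤ ⟨η₂⟩^{-N}⟨η₃⟩^{-N}` with `N` large pushes the exponents in `η₂, η₃`
below `-1`.
-/

open MeasureTheory

/-- The Japanese bracket `⟨t⟩ = (1+t²)^{1/2}`. -/
noncomputable def jb (t : ℝ) : ℝ := Real.sqrt (1 + t ^ 2)

/-- `⟨η⟩ = (1+|η|²)^{1/2}` for `η ∈ ℝ³`. -/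
noncomputable def jb3 (η : Fin 3 → ℝ) : ℝ :=
  Real.sqrt (1 + (η 0) ^ 2 + (η 1) ^ 2 + (η 2) ^ 2)

lemma jb_pos (t : ℝ) : 0 < jb t := Real.sqrt_pos.2 (by positivity)

lemma jb_le_one_add_abs (t : ℝ) : jb t ≤ 1 + |t| :=
  Real.sqrt_le_iff.2 ⟨by positivity, by nlinarith [abs_nonneg t, sq_abs t]⟩

lemma jb_rpow (t p : ℝ) : jb t ^ p = (1 + ‖t‖ ^ 2) ^ (p / 2) := by
  rw [jb, Real.sqrt_eq_rpow, ← Real.rpow_mul (by positivity), Real.norm_eq_abs, sq_abs]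
  ring_nf

lemma integrable_jb_rpow {p : ℝ} (hp : p < -1) : Integrable fun t => jb t ^ p := by
  have h := integrable_rpow_neg_one_add_norm_sq (E := ℝ) (μ := volume) (r := -p)
    (by rw [Module.finrank_self, Nat.cast_one]; linarith)
  simpa only [jb_rpow, neg_neg] using h

lemma integrable_prod_jb_rpow {ι : Type*} [Fintype ι] {p : ι → ℝ} (hp : ∀ i, p i < -1) :
    Integrable fun η : ι → ℝ => ∏ i, jb (η i) ^ p i :=
  Integrable.fintype_prod fun i => integrable_jb_rpow (hp i)

lemma jb3_le_prod_jb (η : Fin 3 → ℝ) : jb3 η ≤ jb (η 0) * jb (η 1) * jb (η 2) := by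
  rw [jb3, jb, jb, jb, ← Real.sqrt_mul (by positivity), ← Real.sqrt_mul (by positivity)]
  refine Real.sqrt_le_sqrt ?_
  have h0 := sq_nonneg (η 0)
  have h1 := sq_nonneg (η 1)
  have h2 := sq_nonneg (η 2)
  nlinarith [mul_nonneg h0 h1, mul_nonneg h1 h2, mul_nonneg h0 h2,
    mul_nonneg (mul_nonneg h0 h1) h2]

lemma jb3_rpow_mul_jb_rpow_le (s k₁ k₂ k₃ : ℝ) (η : Fin 3 → ℝ) :
    jb3 η ^ (2 * s) * jb (η 0) ^ (2 * k₁) * jb (η 1) ^ (2 * k₂) * jb (η 2) ^ (2 * k₃) ≤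
      jb (η 0) ^ (2 * max s 0 + 2 * k₁) * jb (η 1) ^ (2 * max s 0 + 2 * k₂) *
        jb (η 2) ^ (2 * max s 0 + 2 * k₃) := by
  have h0 := jb_pos (η 0)
  have h1 := jb_pos (η 1)
  have h2 := jb_pos (η 2)
  have hjb3 : jb3 η ^ (2 * s) ≤ (jb (η 0) * jb (η 1) * jb (η 2)) ^ (2 * max s 0) :=
    calc jb3 η ^ (2 * s) ≤ jb3 η ^ (2 * max s 0) :=
          Real.rpow_le_rpow_of_exponent_le
            (Real.one_le_sqrt.2 (by nlinarith [sq_nonneg (η 0), sq_nonneg (η 1), sq_nonneg (η 2)]))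
            (by simp)
      _ ≤ _ := Real.rpow_le_rpow (Real.sqrt_nonneg _) (jb3_le_prod_jb η) (by positivity)
  rw [Real.mul_rpow (by positivity) h2.le, Real.mul_rpow h0.le h1.le] at hjb3
  rw [Real.rpow_add h0, Real.rpow_add h1, Real.rpow_add h2]
  calc _ = jb3 η ^ (2 * s) *
          (jb (η 0) ^ (2 * k₁) * jb (η 1) ^ (2 * k₂) * jb (η 2) ^ (2 * k₃)) := by ring
    _ ≤ _ := mul_le_mul_of_nonneg_right hjb3 (by positivity)
    _ = _ := by ring

lemma sq_le_jb_rpow_of_le_decay {m N C u : ℝ} (hm : m ≤ 0) (hN : 0 ≤ N) (hu : 0 ≤ u)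
    (x y z : ℝ) (h : u ≤ C * (1 + |x|) ^ m * (1 + |y| + |z|) ^ (-N)) :
    u ^ 2 ≤ C ^ 2 * (jb x ^ (2 * m) * jb y ^ (-N) * jb z ^ (-N)) := by
  have hx : (1 + |x|) ^ m ≤ jb x ^ m :=
    Real.rpow_le_rpow_of_nonpos (jb_pos x) (jb_le_one_add_abs x) hm
  have hyz : jb y * jb z ≤ (1 + |y| + |z|) ^ 2 :=
    calc jb y * jb z ≤ (1 + |y|) * (1 + |z|) :=
          mul_le_mul (jb_le_one_add_abs y) (jb_le_one_add_abs z) (jb_pos z).le (by positivity)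
      _ ≤ _ := by nlinarith [abs_nonneg y, abs_nonneg z]
  have hyz' : ((1 + |y| + |z|) ^ 2) ^ (-N) ≤ (jb y * jb z) ^ (-N) :=
    Real.rpow_le_rpow_of_nonpos (mul_pos (jb_pos y) (jb_pos z)) hyz (by linarith)
  rw [Real.mul_rpow (jb_pos y).le (jb_pos z).le, ← Real.rpow_pow_comm (by positivity)] at hyz'
  calc u ^ 2 ≤ (C * ((1 + |x|) ^ m * (1 + |y| + |z|) ^ (-N))) ^ 2 := by
        rw [← mul_assoc]
        exact pow_le_pow_left₀ hu h 2
    _ ≤ _ := by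
      rw [mul_pow, mul_pow, mul_assoc, mul_comm 2 m, Real.rpow_mul (jb_pos x).le, Real.rpow_two]
      gcongr

theorem stmt15_general (m : ℝ) (hm : m < 0) (F : (Fin 3 → ℝ) → ℂ)
    (hbound : ∀ N : ℕ, ∃ C : ℝ, 0 < C ∧ ∀ η : Fin 3 → ℝ,
      ‖F η‖ ≤ C * (1 + |η 0|) ^ m * (1 + |η 1| + |η 2|) ^ (-(N : ℝ)))
    (s k₁ k₂ k₃ : ℝ) (hsum : max s 0 + k₁ + m < -(1 / 2)) :
    ∫⁻ η : Fin 3 → ℝ, ENNReal.ofReal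
      (jb3 η ^ (2 * s) * jb (η 0) ^ (2 * k₁) * jb (η 1) ^ (2 * k₂) * jb (η 2) ^ (2 * k₃) *
        ‖F η‖ ^ 2) < ⊤ := by
  set a := max s 0
  obtain ⟨N, hN⟩ := exists_nat_gt (2 * a + 2 * max k₂ k₃ + 1)
  obtain ⟨C, -, hC⟩ := hbound N
  set p : Fin 3 → ℝ := ![2 * a + 2 * k₁ + 2 * m, 2 * a + 2 * k₂ - N, 2 * a + 2 * k₃ - N]
  have hp : ∀ i, p i < -1 := by
    intro i
    fin_cases i <;>
      simp only [p, Fin.zero_eta, Fin.mk_one, Fin.reduceFinMk, Fin.isValue, Matrix.cons_val_zero,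
        Matrix.cons_val_one, Matrix.cons_val] <;>
      linarith [le_max_left k₂ k₃, le_max_right k₂ k₃]
  refine lt_of_le_of_lt (lintegral_mono fun η => ENNReal.ofReal_le_ofReal ?_)
    ((integrable_prod_jb_rpow hp).const_mul (C ^ 2)).lintegral_lt_top
  have h0 := jb_pos (η 0)
  have h1 := jb_pos (η 1)
  have h2 := jb_pos (η 2)
  calc _ ≤ jb (η 0) ^ (2 * a + 2 * k₁) * jb (η 1) ^ (2 * a + 2 * k₂) *
          jb (η 2) ^ (2 * a + 2 * k₃) *
          (C ^ 2 * (jb (η 0) ^ (2 * m) * jb (η 1) ^ (-(N : ℝ)) * jb (η 2) ^ (-(N : ℝ)))) :=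
        mul_le_mul (jb3_rpow_mul_jb_rpow_le s k₁ k₂ k₃ η)
          (sq_le_jb_rpow_of_le_decay hm.le N.cast_nonneg (norm_nonneg _) _ _ _ (hC η))
          (sq_nonneg _) (by positivity)
    _ = C ^ 2 * ∏ i, jb (η i) ^ p i := by
      simp only [Fin.prod_univ_three, p, Matrix.cons_val_zero, Matrix.cons_val_one,
        Matrix.cons_val_two, Matrix.head_cons, Matrix.tail_cons, sub_eq_add_neg,
        Real.rpow_add (jb_pos _)]
      ring

theorem stmt15 (m : ℝ) (hm : m < 0) (F : (Fin 3 → ℝ) → ℂ) (hF : Measurable F)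
    (hbound : ∀ N : ℕ, ∃ C : ℝ, 0 < C ∧ ∀ η : Fin 3 → ℝ,
      ‖F η‖ ≤ C * (1 + |η 0|) ^ m * (1 + |η 1| + |η 2|) ^ (-(N : ℝ)))
    (s k₁ k₂ k₃ : ℝ) (hk₁ : 0 ≤ k₁) (hsum : max s 0 + k₁ + m < -(1 / 2)) :
    ∫⁻ η : Fin 3 → ℝ, ENNReal.ofReal
      (jb3 η ^ (2 * s) * jb (η 0) ^ (2 * k₁) * jb (η 1) ^ (2 * k₂) * jb (η 2) ^ (2 * k₃) *
        ‖F η‖ ^ 2) < ⊤ :=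
  stmt15_general m hm F hbound s k₁ k₂ k₃ hsum
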